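/- Let n ≥ 1 be an integer, s ∈ (0,1], ε ≥ 0 and χ ∈ ℂⁿ. Then the map Γ_s^ε is differentiable at (χ,0), and the determinant of its derivative equals Jac(Γ_s^ε)(χ,0) = s^{2n+3}·|χ|²/3 + s^{2n+1}·ε²/4. -/

import Mathlib

/-!
Writing `Γ_s^ε(χ,θ) = (s φ(sθ) χ, ε²sθ/4 + 2 s² |χ|² ψ(sθ))` with `φ(u) = i(e^{-iu} - 1)/u`,
`φ(0) = 1`, and `ψ(u) = (u - sin u)/u²`, `ψ(0) = 0`, the Taylor expansions `φ(u) = 1 - iu/2 + O(u²)`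
and `ψ(u) = u/6 + O(u³)` give the derivative of `Γ_s^ε` at `(χ,0)`: it is block upper triangular,
`s · id` on `ℂⁿ ≅ ℝ²ⁿ` and multiplication by `ε²s/4 + s³|χ|²/3` on `ℝ`, so its determinant is
`s²ⁿ (ε²s/4 + s³|χ|²/3)`.
-/

open Real

/-- The geodesic-endpoint map `Γ_s^ε : ℂⁿ × ℝ → ℂⁿ × ℝ` of the Riemannian approximation
`M^ε` of the Heisenberg group `ℍⁿ`. -/
noncomputable def heisenbergGamma (n : ℕ) (s ε : ℝ)
    (p : EuclideanSpace ℂ (Fin n) × ℝ) : EuclideanSpace ℂ (Fin n) × ℝ :=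
  if p.2 = 0 then ((s : ℂ) • p.1, 0)
  else
    ((Complex.I * ((Complex.exp (-Complex.I * ((p.2 * s : ℝ) : ℂ)) - 1) / ((p.2 : ℝ) : ℂ))) • p.1,
      ε ^ 2 * (p.2 * s) / 4 + 2 * ‖p.1‖ ^ 2 * (p.2 * s - Real.sin (p.2 * s)) / p.2 ^ 2)

open Asymptotics Filter Topology

theorem LinearMap.det_blockTriangular {R M N : Type*} [CommRing R] [AddCommGroup M] [Module R M]
    [AddCommGroup N] [Module R N] [Module.Free R M] [Module.Finite R M]
    [Module.Free R N] [Module.Finite R N]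
    (f : M →ₗ[R] M) (g : N →ₗ[R] M) (h : N →ₗ[R] N) :
    ((f ∘ₗ fst R M N + g ∘ₗ snd R M N).prod (h ∘ₗ snd R M N)).det = f.det * h.det := by
  classical
  let b := Module.Free.chooseBasis R M
  let b' := Module.Free.chooseBasis R N
  rw [← det_toMatrix (b.prod b'), ← det_toMatrix b, ← det_toMatrix b',
    ← Matrix.det_fromBlocks_zero₂₁ _ (toMatrix b' b g)]
  congr 1
  ext (i | i) (j | j) <;> simp [toMatrix_apply]

theorem hasDerivAt_of_isBigO_sub_sq {𝕜 F : Type*} [NontriviallyNormedField 𝕜]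
    [NormedAddCommGroup F] [NormedSpace 𝕜 F] {f : 𝕜 → F} {f' : F} {x : 𝕜}
    (h : (fun y => f y - f x - (y - x) • f') =O[𝓝 x] fun y => (y - x) ^ 2) :
    HasDerivAt f f' x :=
  hasDerivAt_iff_isLittleO.mpr <| h.trans_isLittleO <| (isLittleO_pow_id one_lt_two).comp_tendsto
    (tendsto_sub_nhds_zero_iff.mpr tendsto_id)

namespace HeisenbergGamma

noncomputable def phi (u : ℝ) : ℂ :=
  if u = 0 then 1 else Complex.I * (Complex.exp (-Complex.I * u) - 1) / u

/-- Lean's `u / 0 = 0` makes `psi 0 = 0`, which is also the limit at `0`. -/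
noncomputable def psi (u : ℝ) : ℝ := (u - Real.sin u) / u ^ 2

theorem norm_phi_sub_le {u : ℝ} (hu : |u| ≤ 1) :
    ‖phi u - 1 - u • (-Complex.I / 2)‖ ≤ |u| ^ 2 := by
  rcases eq_or_ne u 0 with rfl | hu0
  · simp [phi]
  set z : ℂ := -Complex.I * u
  have hz : ‖z‖ = |u| := by simp [z]
  have hexp := Complex.exp_bound (x := z) (hz ▸ hu) (n := 3) three_pos
  have hu' : (u : ℂ) ≠ 0 := by exact_mod_cast hu0
  have key : phi u - 1 - u • (-Complex.I / 2) =
      Complex.I * (Complex.exp z - ∑ m ∈ Finset.range 3, z ^ m / m.factorial) / u := by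
    simp only [phi, if_neg hu0, Finset.sum_range_succ, Finset.sum_range_zero, Complex.real_smul,
      z, Nat.factorial]
    push_cast
    field_simp
    linear_combination (-2 * (u : ℂ) + Complex.I * u ^ 2) * Complex.I_sq
  rw [key, norm_div, norm_mul, Complex.norm_I, one_mul, Complex.norm_real, Real.norm_eq_abs,
    div_le_iff₀ (abs_pos.mpr hu0)]
  calc _ ≤ ‖z‖ ^ 3 * ((Nat.succ 3 : ℝ) * ((Nat.factorial 3 : ℝ) * 3)⁻¹) := hexp
    _ ≤ |u| ^ 2 * |u| := by
      rw [hz, ← pow_succ]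
      norm_num [Nat.factorial]
      linarith [pow_nonneg (abs_nonneg u) 3]

theorem abs_psi_sub_le {u : ℝ} (hu : |u| ≤ 1) : |psi u - u / 6| ≤ |u| ^ 3 := by
  rcases eq_or_ne u 0 with rfl | hu0
  · simp [psi]
  have key : psi u - u / 6 = -(Real.sin u - (u - u ^ 3 / 6)) / u ^ 2 := by
    unfold psi
    field_simp
    ring
  rw [key, abs_div, abs_neg, abs_pow, div_le_iff₀ (by positivity)]
  calc _ ≤ |u| ^ 5 / 100 := Real.sin_bound hu
    _ ≤ |u| ^ 3 * |u| ^ 2 := by nlinarith [pow_nonneg (abs_nonneg u) 5]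

theorem hasDerivAt_phi : HasDerivAt phi (-Complex.I / 2) 0 := by
  refine hasDerivAt_of_isBigO_sub_sq (IsBigO.of_bound 1 ?_)
  filter_upwards [Metric.closedBall_mem_nhds (0 : ℝ) one_pos] with u hu
  have hphi0 : phi 0 = 1 := by simp [phi]
  simpa [hphi0, sq_abs] using norm_phi_sub_le (by simpa using hu)

theorem hasDerivAt_psi : HasDerivAt psi (1 / 6) 0 := by
  refine hasDerivAt_of_isBigO_sub_sq (IsBigO.of_bound 1 ?_)
  filter_upwards [Metric.closedBall_mem_nhds (0 : ℝ) one_pos] with u hu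
  have hu1 : |u| ≤ 1 := by simpa using hu
  have hpsi0 : psi 0 = 0 := by simp [psi]
  simp only [hpsi0, sub_zero, smul_eq_mul, Real.norm_eq_abs, one_mul, abs_pow, sq_abs]
  calc |psi u - u * (1 / 6)| = |psi u - u / 6| := by ring_nf
    _ ≤ |u| ^ 3 := abs_psi_sub_le hu1
    _ ≤ u ^ 2 := by rw [← sq_abs, pow_succ]; nlinarith [abs_nonneg u]

end HeisenbergGamma

open HeisenbergGamma

theorem heisenbergGamma_eq_phi_psi (n : ℕ) (s ε : ℝ) :
    heisenbergGamma n s ε = fun p => (((s : ℂ) * phi (p.2 * s)) • p.1,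
      ε ^ 2 * s / 4 * p.2 + 2 * ‖p.1‖ ^ 2 * (s ^ 2 * psi (p.2 * s))) := by
  funext ⟨v, t⟩
  rcases eq_or_ne t 0 with rfl | ht
  · simp [heisenbergGamma, phi, psi]
  rcases eq_or_ne s 0 with rfl | hs
  · simp [heisenbergGamma, ht]
  have ht' : (t : ℂ) ≠ 0 := by exact_mod_cast ht
  have hs' : (s : ℂ) ≠ 0 := by exact_mod_cast hs
  simp only [heisenbergGamma, phi, psi, if_neg ht, if_neg (mul_ne_zero ht hs), Complex.ofReal_mul,
    Prod.mk.injEq]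
  constructor
  · field_simp
  · field_simp

theorem hasFDerivAt_heisenbergGamma (n : ℕ) (s ε : ℝ) (χ : EuclideanSpace ℂ (Fin n)) :
    HasFDerivAt (heisenbergGamma n s ε)
      ((s • ContinuousLinearMap.fst ℝ (EuclideanSpace ℂ (Fin n)) ℝ +
          (ContinuousLinearMap.snd ℝ (EuclideanSpace ℂ (Fin n)) ℝ).smulRight
            ((-(s ^ 2 / 2) * Complex.I) • χ)).prod
        ((ε ^ 2 * s / 4 + s ^ 3 * ‖χ‖ ^ 2 / 3) •
          ContinuousLinearMap.snd ℝ (EuclideanSpace ℂ (Fin n)) ℝ)) (χ, 0) := by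
  have hθ : HasFDerivAt (fun p : EuclideanSpace ℂ (Fin n) × ℝ => p.2 * s)
      (s • ContinuousLinearMap.snd ℝ _ ℝ) (χ, 0) := by
    simpa [mul_comm] using (hasFDerivAt_snd (p := (χ, (0 : ℝ)))).const_mul s
  have hθ0 : (0 : ℝ) = (χ, (0 : ℝ)).2 * s := (zero_mul s).symm
  have hφ := ((hθ0 ▸ hasDerivAt_phi).hasFDerivAt.comp (χ, 0) hθ).const_mul (s : ℂ)
  have hψ := ((hθ0 ▸ hasDerivAt_psi).hasFDerivAt.comp (χ, 0) hθ).const_mul (s ^ 2)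
  rw [heisenbergGamma_eq_phi_psi]
  apply ((hφ.smul hasFDerivAt_fst).prodMk ((hasFDerivAt_snd.const_mul (ε ^ 2 * s / 4)).add
    ((hasFDerivAt_fst.norm_sq.const_mul 2).mul hψ))).congr_fderiv
  refine ContinuousLinearMap.ext fun ⟨v, t⟩ => Prod.ext ?_ ?_
  · simp [phi, ← Complex.coe_smul, smul_smul]
    rw [← neg_smul]
    congr 1
    ring
  · simp [psi]
    ring

theorem heisenbergGamma_jacobian_at_zero_general (n : ℕ) (s ε : ℝ) (χ : EuclideanSpace ℂ (Fin n)) :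
    DifferentiableAt ℝ (heisenbergGamma n s ε) (χ, 0) ∧
      LinearMap.det (fderiv ℝ (heisenbergGamma n s ε) (χ, 0)).toLinearMap =
        s ^ (2 * n + 3) * ‖χ‖ ^ 2 / 3 + s ^ (2 * n + 1) * ε ^ 2 / 4 := by
  have hΓ := hasFDerivAt_heisenbergGamma n s ε χ
  refine ⟨hΓ.differentiableAt, ?_⟩
  have hdim : Module.finrank ℝ (EuclideanSpace ℂ (Fin n)) = 2 * n := by
    rw [← Module.finrank_mul_finrank ℝ ℂ, Complex.finrank_real_complex, finrank_euclideanSpace_fin]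
  rw [hΓ.fderiv]
  change LinearMap.det (((s • LinearMap.id) ∘ₗ LinearMap.fst ℝ _ ℝ +
      (LinearMap.toSpanSingleton ℝ _ ((-(s ^ 2 / 2) * Complex.I) • χ)) ∘ₗ LinearMap.snd ℝ _ ℝ).prod
      (((ε ^ 2 * s / 4 + s ^ 3 * ‖χ‖ ^ 2 / 3) • LinearMap.id) ∘ₗ LinearMap.snd ℝ _ ℝ)) = _
  rw [LinearMap.det_blockTriangular, LinearMap.det_smul, LinearMap.det_smul, LinearMap.det_id,
    LinearMap.det_id, hdim, Module.finrank_self]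
  ring

/-- For `n ≥ 1`, `s ∈ (0,1]`, `ε ≥ 0` and `χ ∈ ℂⁿ`, the map `Γ_s^ε` is differentiable at
`(χ,0)` and the determinant of its (real) Fréchet derivative equals
`s^{2n+3} |χ|²/3 + s^{2n+1} ε²/4`. -/
theorem heisenbergGamma_jacobian_at_zero (n : ℕ) (hn : 1 ≤ n) (s ε : ℝ)
    (hs : s ∈ Set.Ioc (0 : ℝ) 1) (hε : 0 ≤ ε) (χ : EuclideanSpace ℂ (Fin n)) :
    DifferentiableAt ℝ (heisenbergGamma n s ε) (χ, 0) ∧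
      LinearMap.det (fderiv ℝ (heisenbergGamma n s ε) (χ, 0)).toLinearMap =
        s ^ (2 * n + 3) * ‖χ‖ ^ 2 / 3 + s ^ (2 * n + 1) * ε ^ 2 / 4 :=
  heisenbergGamma_jacobian_at_zero_general n s ε χ
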